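/- arXiv:1308.4092 — 2 statements merged into one kernel-verified Lean document; each statement's English description precedes it below -/
import Mathlib

section
/- For all complex θ0, θt, θ1, θ∞, σ0t, σ1t, with pμ = 2cos(2πθμ), p0t = 2cos(2πσ0t), p1t = 2cos(2πσ1t), the identity A² − det G = 4·N·D holds. Equivalently, when D ≠ 0 and q² = det G, the two roots z± = (A ± q)/(2D) satisfy z₊·z₋ = N/D. -/
/-!
In the multiplicative variables `x = e^{2πiθ}` one has `2 cos 2πθ = x + x⁻¹` and
`4 sin 2πx sin 2πy = -(x - x⁻¹)(y - y⁻¹)`, while every exponent `νΣ - ν_k`, `νΣ - λ_k` is a sum of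
the parameters, so `D` becomes a Laurent polynomial and `N` is the same Laurent polynomial in the
inverted variables. The identity `A² - det G = 4ND` is then a Laurent polynomial identity, checked by
clearing denominators, and `z₊ z₋ = (A² - q²)/(4D²) = N/D`.
-/

open Complex Real

section Field

variable {K : Type*} [Field K]

def monodromyGram (p0 pt p1 pinf p0t p1t : K) : Matrix (Fin 4) (Fin 4) K :=
  !![2, -p0, -pt, p1t;
     -p0, 2, p0t, -pinf;
     -pt, p0t, 2, -p1;
     p1t, -pinf, -p1, 2]

theorem det_monodromyGram (p0 pt p1 pinf p0t p1t : K) :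
    (monodromyGram p0 pt p1 pinf p0t p1t).det =
      16 + 4 * p1 * p0t * pinf - 2 * p1 * p0t * p0 * p1t - 2 * p1 * pinf * p0 * pt
      + 4 * p1 * pt * p1t - 4 * p1 ^ 2 + p1 ^ 2 * p0 ^ 2 - 2 * p0t * pinf * pt * p1t
      + 4 * p0t * p0 * pt - 4 * p0t ^ 2 + p0t ^ 2 * p1t ^ 2 + 4 * pinf * p0 * p1t
      - 4 * pinf ^ 2 + pinf ^ 2 * pt ^ 2 - 4 * p0 ^ 2 - 4 * pt ^ 2 - 4 * p1t ^ 2 := by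
  rw [Matrix.det_succ_row_zero, Fin.sum_univ_four]
  simp only [Matrix.det_fin_three, Nat.succ_eq_add_one, Nat.reduceAdd, Fin.isValue,
    Fin.coe_ofNat_eq_mod, Nat.zero_mod, pow_zero, monodromyGram, Matrix.of_apply, Matrix.cons_val',
    Matrix.cons_val_zero, Matrix.cons_val_fin_one, one_mul, Fin.succAbove_zero,
    Matrix.submatrix_apply, Fin.succ_zero_eq_one, Matrix.cons_val_one, Fin.succ_one_eq_two,
    Matrix.cons_val, Fin.reduceSucc, mul_neg, neg_mul, neg_neg, Nat.one_mod, pow_one, Fin.succAbove,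
    Fin.castSucc_zero, zero_lt_one, ↓reduceIte, Fin.castSucc_one, lt_self_iff_false,
    Fin.reduceCastSucc, Fin.lt_one_iff, Fin.reduceEq, sub_neg_eq_add, Nat.reduceMod, even_two,
    Even.neg_pow, one_pow, Fin.reduceLT, Nat.mod_succ]
  ring

/-- `D` in the variables `a, b, c, d, u, v = e^{2πiθ0}, e^{2πiθt}, e^{2πiθ1}, e^{2πiθ∞}, e^{2πiσ0t},
e^{2πiσ1t}`; `N` is the same expression in their inverses. -/
def jimboSum (a b c d u v : K) : K :=
  v * c * d - u * v + v * a * b - b * d + u * b * c - a * c + u * a * d - u * v * a * b * c * d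

theorem sq_sub_det_monodromyGram (a b c d u v : K) (ha : a ≠ 0) (hb : b ≠ 0) (hc : c ≠ 0)
    (hd : d ≠ 0) (hu : u ≠ 0) (hv : v ≠ 0) :
    ((u - u⁻¹) * (v - v⁻¹) + (b - b⁻¹) * (d - d⁻¹) + (a - a⁻¹) * (c - c⁻¹)) ^ 2
      - (monodromyGram (a + a⁻¹) (b + b⁻¹) (c + c⁻¹) (d + d⁻¹) (u + u⁻¹) (v + v⁻¹)).det
      = 4 * jimboSum a⁻¹ b⁻¹ c⁻¹ d⁻¹ u⁻¹ v⁻¹ * jimboSum a b c d u v := by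
  rw [det_monodromyGram, jimboSum, jimboSum]
  field_simp
  ring

theorem add_div_mul_sub_div_eq_div [NeZero (2 : K)] {A q D N : K}
    (h : A ^ 2 - q ^ 2 = 4 * N * D) (hD : D ≠ 0) :
    (A + q) / (2 * D) * ((A - q) / (2 * D)) = N / D := by
  field_simp
  linear_combination h

end Field

noncomputable def expTwoPiI (x : ℂ) : ℂ := exp (2 * π * I * x)

theorem expTwoPiI_add (x y : ℂ) : expTwoPiI (x + y) = expTwoPiI x * expTwoPiI y := by
  rw [expTwoPiI, expTwoPiI, expTwoPiI, ← Complex.exp_add, mul_add]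

theorem expTwoPiI_neg (x : ℂ) : expTwoPiI (-x) = (expTwoPiI x)⁻¹ := by
  rw [expTwoPiI, expTwoPiI, mul_neg, Complex.exp_neg]

theorem expTwoPiI_ne_zero (x : ℂ) : expTwoPiI x ≠ 0 := Complex.exp_ne_zero _

theorem two_cos_two_pi_mul (x : ℂ) :
    2 * cos (2 * π * x) = expTwoPiI x + (expTwoPiI x)⁻¹ := by
  rw [expTwoPiI, ← Complex.exp_neg, two_cos]
  ring_nf

theorem four_sin_two_pi_mul_sin (x y : ℂ) :
    4 * sin (2 * π * x) * sin (2 * π * y) =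
      -((expTwoPiI x - (expTwoPiI x)⁻¹) * (expTwoPiI y - (expTwoPiI y)⁻¹)) := by
  simp only [expTwoPiI, ← Complex.exp_neg, Complex.sin]
  ring_nf
  simp only [I_sq]
  ring

theorem jimboSum_expTwoPiI (θ0 θt θ1 θinf σ0t σ1t : ℂ) :
    jimboSum (expTwoPiI θ0) (expTwoPiI θt) (expTwoPiI θ1) (expTwoPiI θinf)
        (expTwoPiI σ0t) (expTwoPiI σ1t) =
      (expTwoPiI (σ1t + θ1 + θinf) - expTwoPiI (σ0t + σ1t))
      + (expTwoPiI (σ1t + θ0 + θt) - expTwoPiI (θt + θinf))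
      + (expTwoPiI (σ0t + θt + θ1) - expTwoPiI (θ0 + θ1))
      + (expTwoPiI (σ0t + θ0 + θinf) - expTwoPiI (σ0t + σ1t + θ0 + θt + θ1 + θinf)) := by
  simp only [expTwoPiI_add, jimboSum]
  ring

/-- the identity `A² − det G = 4·N·D`; equivalently, when `D ≠ 0` and
`q² = det G`, the roots `z± = (A ± q)/(2D)` satisfy `z₊·z₋ = N/D`. -/
theorem zp_zm_product
    (θ0 θt θ1 θinf σ0t σ1t : ℂ) (p0 pt p1 pinf p0t p1t : ℂ)
    (hp0 : p0 = 2 * Complex.cos (2 * (π : ℂ) * θ0))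
    (hpt : pt = 2 * Complex.cos (2 * (π : ℂ) * θt))
    (hp1 : p1 = 2 * Complex.cos (2 * (π : ℂ) * θ1))
    (hpinf : pinf = 2 * Complex.cos (2 * (π : ℂ) * θinf))
    (hp0t : p0t = 2 * Complex.cos (2 * (π : ℂ) * σ0t))
    (hp1t : p1t = 2 * Complex.cos (2 * (π : ℂ) * σ1t))
    (G : Matrix (Fin 4) (Fin 4) ℂ)
    (hG : G = !![2, -p0, -pt, p1t;
                 -p0, 2, p0t, -pinf;
                 -pt, p0t, 2, -p1;
                 p1t, -pinf, -p1, 2])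
    (ν1 ν2 ν3 ν4 lam1 lam2 lam3 lam4 νS A D N : ℂ)
    (hν1 : ν1 = σ0t + θ0 + θt) (hν2 : ν2 = σ0t + θ1 + θinf)
    (hν3 : ν3 = σ1t + θ0 + θinf) (hν4 : ν4 = σ1t + θt + θ1)
    (hlam1 : lam1 = θ0 + θt + θ1 + θinf) (hlam2 : lam2 = σ0t + σ1t + θ0 + θ1)
    (hlam3 : lam3 = σ0t + σ1t + θt + θinf) (hlam4 : lam4 = 0)
    (hνS : νS = (ν1 + ν2 + ν3 + ν4) / 2)
    (hA : A = 4 * Complex.sin (2 * (π : ℂ) * σ0t) * Complex.sin (2 * (π : ℂ) * σ1t)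
            + 4 * Complex.sin (2 * (π : ℂ) * θt) * Complex.sin (2 * (π : ℂ) * θinf)
            + 4 * Complex.sin (2 * (π : ℂ) * θ0) * Complex.sin (2 * (π : ℂ) * θ1))
    (hD : D = (Complex.exp (2 * (π : ℂ) * I * (νS - ν1)) - Complex.exp (2 * (π : ℂ) * I * (νS - lam1)))
            + (Complex.exp (2 * (π : ℂ) * I * (νS - ν2)) - Complex.exp (2 * (π : ℂ) * I * (νS - lam2)))
            + (Complex.exp (2 * (π : ℂ) * I * (νS - ν3)) - Complex.exp (2 * (π : ℂ) * I * (νS - lam3)))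
            + (Complex.exp (2 * (π : ℂ) * I * (νS - ν4)) - Complex.exp (2 * (π : ℂ) * I * (νS - lam4))))
    (hN : N = (Complex.exp (2 * (π : ℂ) * I * (ν1 - νS)) - Complex.exp (2 * (π : ℂ) * I * (lam1 - νS)))
            + (Complex.exp (2 * (π : ℂ) * I * (ν2 - νS)) - Complex.exp (2 * (π : ℂ) * I * (lam2 - νS)))
            + (Complex.exp (2 * (π : ℂ) * I * (ν3 - νS)) - Complex.exp (2 * (π : ℂ) * I * (lam3 - νS)))
            + (Complex.exp (2 * (π : ℂ) * I * (ν4 - νS)) - Complex.exp (2 * (π : ℂ) * I * (lam4 - νS)))) :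
    A ^ 2 - G.det = 4 * N * D ∧
    (∀ q : ℂ, q ^ 2 = G.det → D ≠ 0 →
      ((A + q) / (2 * D)) * ((A - q) / (2 * D)) = N / D) := by
  subst hν1 hν2 hν3 hν4 hlam1 hlam2 hlam3 hlam4 hνS
  simp only [← expTwoPiI.eq_1] at hD hN
  set a := expTwoPiI θ0
  set b := expTwoPiI θt
  set c := expTwoPiI θ1
  set d := expTwoPiI θinf
  set u := expTwoPiI σ0t
  set v := expTwoPiI σ1t
  have hD' : D = jimboSum a b c d u v := by
    rw [hD, jimboSum_expTwoPiI]
    ring_nf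
  have hN' : N = jimboSum a⁻¹ b⁻¹ c⁻¹ d⁻¹ u⁻¹ v⁻¹ := by
    simp only [a, b, c, d, u, v, ← expTwoPiI_neg]
    rw [hN, jimboSum_expTwoPiI]
    ring_nf
  have hdet : G = monodromyGram (a + a⁻¹) (b + b⁻¹) (c + c⁻¹) (d + d⁻¹) (u + u⁻¹) (v + v⁻¹) := by
    rw [hG, hp0, hpt, hp1, hpinf, hp0t, hp1t]
    simp only [two_cos_two_pi_mul]
    rfl
  have hA' : A = -((u - u⁻¹) * (v - v⁻¹) + (b - b⁻¹) * (d - d⁻¹) + (a - a⁻¹) * (c - c⁻¹)) := by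
    rw [hA]
    simp only [four_sin_two_pi_mul_sin]
    ring
  have h_sq_sub_det : A ^ 2 - G.det = 4 * N * D := by
    rw [hA', neg_sq, hdet, hN', hD']
    exact sq_sub_det_monodromyGram _ _ _ _ _ _ (expTwoPiI_ne_zero _) (expTwoPiI_ne_zero _)
      (expTwoPiI_ne_zero _) (expTwoPiI_ne_zero _) (expTwoPiI_ne_zero _) (expTwoPiI_ne_zero _)
  exact ⟨h_sq_sub_det, fun q hq hD0 => add_div_mul_sub_div_eq_div (hq ▸ h_sq_sub_det) hD0⟩
end

section
/- (Fusion check for Zamolodchikov's c = 25 conformal block.) For every τ ∈ ℂ with Im τ > 0 and every σ ∈ ℂ with σ ≠ 0: 2^{4σ²}·e^{iπσ²τ} / θ₃(τ)³ = ∫_{0}^{∞} (2^{4σ²}/σ)·2·sin(2πσρ)·ρ · e^{−iπρ²/τ} / θ₃(−1/τ)³ dρ, where the integral is over real ρ ∈ (0,∞). Equivalently, the kernel F₂₅(ρ,σ) = (2^{−4σ²}σ)^{−1}·2 sin(2πσρ)·(2^{−4ρ²}ρ) intertwines the s- and t-channel c = 25 blocks with all external momenta i/4 in the elliptic parameterization.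 -/
/-!
The integrand is even in `ρ`, so the half-line integral is half the integral over `ℝ`. Writing
the sine through exponentials reduces it to the first Gaussian moment
`∫ x e^{-bx² + cx} dx = c/(2b) · √(π/b) · e^{c²/(4b)}` at `b = iπ/τ`, which follows from the
Gaussian integral because the derivative of `e^{-bx² + cx}` integrates to zero over `ℝ`.
The factor `√(π/b) = √(-iτ)` produced this way is the one in `θ₃(-1/τ) = √(-iτ) θ₃(τ)`.
-/

open Complex Real MeasureTheory Set Filter

theorem integral_eq_two_smul_setIntegral_Ioi_of_even {E : Type*} [NormedAddCommGroup E]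
    [NormedSpace ℝ E] {f : ℝ → E} (heven : Function.Even f) (hf : Integrable f) :
    ∫ x, f x = (2 : ℝ) • ∫ x in Ioi 0, f x := by
  have hIic : ∫ x in Iic 0, f x = ∫ x in Ioi 0, f x := by
    simpa only [neg_zero, heven _] using (integral_comp_neg_Ioi 0 f).symm
  rw [← intervalIntegral.integral_Iic_add_Ioi hf.integrableOn hf.integrableOn, hIic, two_smul]

section GaussianMoments

variable {b : ℂ}

lemma hasDerivAt_cexp_quadratic (b c : ℂ) (x : ℝ) :
    HasDerivAt (fun x : ℝ => cexp (-b * x ^ 2 + c * x))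
      ((-2 * b * x + c) * cexp (-b * x ^ 2 + c * x)) x := by
  have h : HasDerivAt (fun z : ℂ => -b * z ^ 2 + c * z) (-2 * b * x + c) x :=
    (((hasDerivAt_pow 2 (x : ℂ)).const_mul (-b)).add
      ((hasDerivAt_id (x : ℂ)).const_mul c)).congr_deriv (by push_cast; ring)
  simpa [mul_comm] using h.cexp.comp_ofReal

lemma integrable_mul_cexp_quadratic (hb : 0 < b.re) (c : ℂ) :
    Integrable (fun x : ℝ => x * cexp (-b * x ^ 2 + c * x)) := by
  have hE (d : ℂ) : Integrable (fun x : ℝ => cexp (-b * x ^ 2 + d * x)) := by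
    simpa using integrable_cexp_quadratic hb d 0
  -- `|x| ≤ eˣ + e⁻ˣ` trades the factor `x` for a shift of the linear coefficient by `±1`.
  refine ((hE (c + (1 : ℝ))).norm.add (hE (c + (-1 : ℝ))).norm).mono' (by fun_prop)
    (.of_forall fun x => ?_)
  have habs : |x| ≤ rexp x + rexp (-x) := by
    rcases abs_cases x with ⟨h, -⟩ | ⟨h, -⟩ <;> rw [h] <;>
      linarith [add_one_le_exp x, add_one_le_exp (-x), exp_pos x, exp_pos (-x)]
  have hshift (e : ℝ) :
      ‖cexp (-b * x ^ 2 + (c + e) * x)‖ = rexp (e * x) * ‖cexp (-b * x ^ 2 + c * x)‖ := by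
    rw [show -b * x ^ 2 + (c + e) * x = ((e * x : ℝ) : ℂ) + (-b * x ^ 2 + c * x) by
      push_cast; ring, Complex.exp_add, norm_mul, norm_exp_ofReal]
  calc ‖(x : ℂ) * cexp (-b * x ^ 2 + c * x)‖
      ≤ (rexp x + rexp (-x)) * ‖cexp (-b * x ^ 2 + c * x)‖ := by
        rw [norm_mul, norm_real, Real.norm_eq_abs]; gcongr
    _ = ‖cexp (-b * x ^ 2 + (c + (1 : ℝ)) * x)‖ +
          ‖cexp (-b * x ^ 2 + (c + (-1 : ℝ)) * x)‖ := by
        rw [hshift, hshift, one_mul, neg_one_mul, add_mul]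

theorem integral_mul_cexp_quadratic (hb : 0 < b.re) (c : ℂ) :
    ∫ x : ℝ, x * cexp (-b * x ^ 2 + c * x) =
      c / (2 * b) * ((π / b) ^ (1 / 2 : ℂ) * cexp (c ^ 2 / (4 * b))) := by
  have hb0 : b ≠ 0 := fun h => by simp [h] at hb
  have hE : Integrable (fun x : ℝ => cexp (-b * x ^ 2 + c * x)) := by
    simpa using integrable_cexp_quadratic hb c 0
  have hxE := integrable_mul_cexp_quadratic hb c
  have hgauss : ∫ x : ℝ, cexp (-b * x ^ 2 + c * x) =
      (π / b) ^ (1 / 2 : ℂ) * cexp (c ^ 2 / (4 * b)) := by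
    simpa [neg_div, div_neg] using integral_cexp_quadratic (b := -b) (by simpa using hb) c 0
  have hsplit : ∫ x : ℝ, (-2 * b * x + c) * cexp (-b * x ^ 2 + c * x) =
      -2 * b * (∫ x : ℝ, x * cexp (-b * x ^ 2 + c * x)) +
        c * ∫ x : ℝ, cexp (-b * x ^ 2 + c * x) := by
    rw [← integral_const_mul, ← integral_const_mul,
      ← integral_add (hxE.const_mul _) (hE.const_mul _)]
    congr 1; ext x; ring
  have hderiv_int : Integrable (fun x : ℝ => (-2 * b * x + c) * cexp (-b * x ^ 2 + c * x)) :=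
    ((hxE.const_mul (-2 * b)).add (hE.const_mul c)).congr (.of_forall fun x => by
      simp only [Pi.add_apply]; ring)
  have hzero := integral_eq_zero_of_hasDerivAt_of_integrable (hasDerivAt_cexp_quadratic b c)
    hderiv_int hE
  rw [hsplit, hgauss] at hzero
  generalize ∫ x : ℝ, x * cexp (-b * x ^ 2 + c * x) = J at hzero ⊢
  rw [div_mul_eq_mul_div, eq_div_iff (mul_ne_zero two_ne_zero hb0)]
  linear_combination -hzero

theorem setIntegral_Ioi_mul_sin_mul_cexp_neg_mul_sq (hb : 0 < b.re) (a : ℂ) :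
    ∫ x in Ioi (0 : ℝ), x * Complex.sin (a * x) * cexp (-b * x ^ 2) =
      a / (4 * b) * ((π / b) ^ (1 / 2 : ℂ) * cexp (-a ^ 2 / (4 * b))) := by
  have hsin (x : ℝ) : (x : ℂ) * Complex.sin (a * x) * cexp (-b * x ^ 2) =
      I / 2 * (x * cexp (-b * x ^ 2 + -(I * a) * x) - x * cexp (-b * x ^ 2 + I * a * x)) := by
    simp only [Complex.sin, Complex.exp_add]
    ring_nf
  have hint (c : ℂ) := integrable_mul_cexp_quadratic hb c
  have heven : Function.Even fun x : ℝ => (x : ℂ) * Complex.sin (a * x) * cexp (-b * x ^ 2) :=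
    fun x => by simp only [ofReal_neg, mul_neg, Complex.sin_neg, neg_sq]; ring
  have hwhole : ∫ x : ℝ, x * Complex.sin (a * x) * cexp (-b * x ^ 2) =
      a / (2 * b) * ((π / b) ^ (1 / 2 : ℂ) * cexp (-a ^ 2 / (4 * b))) := by
    simp_rw [hsin]
    rw [integral_const_mul, integral_sub (hint _) (hint _), integral_mul_cexp_quadratic hb,
      integral_mul_cexp_quadratic hb, neg_sq, mul_pow, I_sq, neg_one_mul]
    linear_combination -a / (2 * b) * ((π / b) ^ (1 / 2 : ℂ) * cexp (-a ^ 2 / (4 * b))) * I_sq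
  have hhalf := integral_eq_two_smul_setIntegral_Ioi_of_even heven
    ((((hint _).sub (hint _)).const_mul (I / 2)).congr (.of_forall fun x => (hsin x).symm))
  rw [hwhole, real_smul, ofReal_ofNat] at hhalf
  linear_combination -hhalf / 2

end GaussianMoments

lemma re_I_mul_ofReal_div_pos {r : ℝ} (hr : 0 < r) {τ : ℂ} (hτ : 0 < τ.im) :
    0 < (I * r / τ).re := by
  have hτ0 : τ ≠ 0 := fun h => by simp [h] at hτ
  have hre : (I * r / τ).re = r * τ.im / normSq τ := by
    simp only [div_re, mul_re, mul_im, I_re, I_im, ofReal_re, ofReal_im]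
    ring
  rw [hre]
  exact div_pos (mul_pos hr hτ) (normSq_pos.mpr hτ0)

theorem jacobiTheta_neg_one_div {τ : ℂ} (hτ : 0 < τ.im) :
    jacobiTheta (-1 / τ) = (-I * τ) ^ (1 / 2 : ℂ) * jacobiTheta τ := by
  convert jacobiTheta_S_smul ⟨τ, hτ⟩ using 2
  rw [UpperHalfPlane.modular_S_smul]
  simp [neg_div, inv_neg]

/-- fusion check for Zamolodchikov's `c = 25` conformal block:
the kernel `F₂₅(ρ,σ) = (2^{−4σ²}σ)⁻¹·2 sin(2πσρ)·(2^{−4ρ²}ρ)` intertwines the s- and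
t-channel `c = 25` blocks with all external momenta `i/4` in the elliptic
parameterization. -/
theorem zamolodchikov_c25_fusion (τ σ : ℂ) (hτ : 0 < τ.im) (hσ : σ ≠ 0) :
    (2 : ℂ) ^ (4 * σ ^ 2) * Complex.exp (I * (π : ℂ) * σ ^ 2 * τ) / jacobiTheta τ ^ 3 =
    ∫ ρ : ℝ in Set.Ioi (0 : ℝ),
      ((2 : ℂ) ^ (4 * σ ^ 2) / σ) * 2 * Complex.sin (2 * (π : ℂ) * σ * (ρ : ℂ)) * (ρ : ℂ) *
        Complex.exp (-I * (π : ℂ) * (ρ : ℂ) ^ 2 / τ) / jacobiTheta (-1 / τ) ^ 3 := by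
  have hτ0 : τ ≠ 0 := fun h => by simp [h] at hτ
  have hπ : (π : ℂ) ≠ 0 := ofReal_ne_zero.mpr pi_ne_zero
  have hb : 0 < (I * π / τ).re := re_I_mul_ofReal_div_pos pi_pos hτ
  set s := (-I * τ) ^ (1 / 2 : ℂ) with hs
  have hs0 : s ≠ 0 := by simp [s, cpow_eq_zero_iff, hτ0]
  have hs2 : s ^ 2 = -I * τ := by rw [hs, one_div, cpow_ofNat_inv_pow]
  have hintegrand (ρ : ℝ) :
      ((2 : ℂ) ^ (4 * σ ^ 2) / σ) * 2 * Complex.sin (2 * (π : ℂ) * σ * (ρ : ℂ)) * (ρ : ℂ) *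
        Complex.exp (-I * (π : ℂ) * (ρ : ℂ) ^ 2 / τ) / jacobiTheta (-1 / τ) ^ 3 =
      (2 : ℂ) ^ (4 * σ ^ 2) / σ * 2 / jacobiTheta (-1 / τ) ^ 3 *
        (ρ * Complex.sin (2 * π * σ * ρ) * cexp (-(I * π / τ) * ρ ^ 2)) := by
    ring_nf
  simp_rw [hintegrand]
  rw [integral_const_mul, setIntegral_Ioi_mul_sin_mul_cexp_neg_mul_sq hb,
    jacobiTheta_neg_one_div hτ]
  have hratio : (π : ℂ) / (I * π / τ) = -I * τ := by
    field_simp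
    linear_combination I_sq
  have hexponent : -(2 * (π : ℂ) * σ) ^ 2 / (4 * (I * π / τ)) = I * π * σ ^ 2 * τ := by
    field_simp
    linear_combination -4 * I_sq
  have hprefactor : 2 * (π : ℂ) * σ / (4 * (I * π / τ)) = σ * s ^ 2 / 2 := by
    rw [hs2]
    field_simp
    linear_combination 4 * I_sq
  rw [hratio, hexponent, hprefactor, ← hs, mul_pow]
  field_simp
end
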